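/- arXiv:1507.08465 — 3 statements merged into one kernel-verified Lean document; each statement's English description precedes it below -/
import Mathlib

section
/- Let $u_0 \in C^\infty(\mathbb{R})$ with $u_0'(0) \neq 0$, and for $\varepsilon > 0$ set $u_\varepsilon(t,x) = u_0(\varepsilon\,\mathrm{arsinh}(e^{t/\varepsilon}\sinh(x/\varepsilon)))$. Then $\partial_x u_\varepsilon(t,0) = u_0'(0)\, e^{t/\varepsilon}$; in particular, for any fixed $t > 0$ and any $N \ge 0$, $|\partial_x u_\varepsilon(t,0)|$ is not $O(\varepsilon^{-N})$ as $\varepsilon \downarrow 0$. -/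
open Asymptotics Filter

/-- The regularized solution `u_ε(t,x) = u₀(ε arsinh(e^{t/ε} sinh(x/ε)))`. -/
noncomputable def uEps (u0 : ℝ → ℝ) (ε t x : ℝ) : ℝ :=
  u0 (ε * Real.arsinh (Real.exp (t / ε) * Real.sinh (x / ε)))

theorem stmt_6 (u0 : ℝ → ℝ) (hu0 : ContDiff ℝ (⊤ : ℕ∞) u0) (hu0' : deriv u0 0 ≠ 0) :
    (∀ ε : ℝ, 0 < ε → ∀ t : ℝ,
      deriv (fun x => uEps u0 ε t x) 0 = deriv u0 0 * Real.exp (t / ε)) ∧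
    (∀ t : ℝ, 0 < t → ∀ N : ℝ, 0 ≤ N →
      ¬ ((fun ε : ℝ => deriv (fun x => uEps u0 ε t x) 0)
          =O[nhdsWithin 0 (Set.Ioi 0)] fun ε : ℝ => ε ^ (-N))) := by
  have hkey : ∀ ε : ℝ, 0 < ε → ∀ t : ℝ,
      deriv (fun x => uEps u0 ε t x) 0 = deriv u0 0 * Real.exp (t / ε) := by
    intro ε hε t
    set c := Real.exp (t / ε) with hc
    have hεne : ε ≠ 0 := hε.ne'
    have h1 : HasDerivAt (fun x : ℝ => x / ε) (1 / ε) 0 := by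
      simpa using (hasDerivAt_id (0 : ℝ)).div_const ε
    have h2 : HasDerivAt (fun x : ℝ => Real.sinh (x / ε)) (1 / ε) 0 := by
      have := (Real.hasDerivAt_sinh ((0 : ℝ) / ε)).comp 0 h1
      simpa [Function.comp_def] using this
    have h3 : HasDerivAt (fun x : ℝ => c * Real.sinh (x / ε)) (c / ε) 0 := by
      simpa [mul_one_div, div_eq_mul_inv] using h2.const_mul c
    have h4 : HasDerivAt (fun x : ℝ => Real.arsinh (c * Real.sinh (x / ε))) (c / ε) 0 := by
      have h := (Real.hasDerivAt_arsinh (c * Real.sinh ((0 : ℝ) / ε))).comp 0 h3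
      simpa [Function.comp_def] using h
    have h5 : HasDerivAt (fun x : ℝ => ε * Real.arsinh (c * Real.sinh (x / ε))) c 0 := by
      have heq : ε * (c / ε) = c := by field_simp
      simpa [heq] using h4.const_mul ε
    have hu : HasDerivAt u0 (deriv u0 0) 0 :=
      (hu0.differentiable (by simp) 0).hasDerivAt
    have h0 : ε * Real.arsinh (c * Real.sinh (0 / ε)) = 0 := by simp
    have hu' : HasDerivAt u0 (deriv u0 0) (ε * Real.arsinh (c * Real.sinh (0 / ε))) := by
      rw [h0]; exact hu
    have h6 := hu'.comp 0 h5
    exact HasDerivAt.deriv (by simpa [uEps, Function.comp_def, ← hc] using h6)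
  refine ⟨hkey, ?_⟩
  intro t ht N hN h
  have hd : 0 < |deriv u0 0| := abs_pos.mpr hu0'
  obtain ⟨C, hC⟩ := h.bound
  have htend : Tendsto (fun ε : ℝ => Real.exp (t / ε) * ε ^ N)
      (nhdsWithin 0 (Set.Ioi 0)) atTop := by
    have h2 : Tendsto (fun y : ℝ => Real.exp (t * y) / y ^ N) atTop atTop :=
      tendsto_exp_mul_div_rpow_atTop N t ht
    have h3 := h2.comp tendsto_inv_nhdsGT_zero
    refine h3.congr' ?_
    filter_upwards [self_mem_nhdsWithin] with ε hε
    have hε' : (0 : ℝ) < ε := hε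
    simp only [Function.comp]
    rw [Real.inv_rpow hε'.le, div_eq_mul_inv, inv_inv, ← div_eq_mul_inv]
  have hev := htend.eventually_gt_atTop (C / |deriv u0 0|)
  obtain ⟨ε, ⟨hb, hg⟩, hε⟩ := ((hC.and hev).and self_mem_nhdsWithin).exists
  have hε' : (0 : ℝ) < ε := hε
  rw [hkey ε hε' t] at hb
  have hrpos : (0 : ℝ) < ε ^ (-N) := Real.rpow_pos_of_pos hε' _
  rw [Real.norm_eq_abs, Real.norm_eq_abs, abs_mul, Real.abs_exp,
    abs_of_pos hrpos, Real.rpow_neg hε'.le] at hb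
  have hpow : (0 : ℝ) < ε ^ N := Real.rpow_pos_of_pos hε' _
  have hle : |deriv u0 0| * (Real.exp (t / ε) * ε ^ N) ≤ C := by
    have := mul_le_mul_of_nonneg_right hb hpow.le
    rw [mul_assoc |deriv u0 0|, mul_assoc C, inv_mul_cancel₀ hpow.ne', mul_one] at this
    exact this
  have : Real.exp (t / ε) * ε ^ N ≤ C / |deriv u0 0| :=
    (le_div_iff₀' hd).mpr hle
  linarith
end

section
/- For fixed $t > 0$ and $x \neq 0$, $\lim_{\varepsilon \downarrow 0} \varepsilon\,\mathrm{arsinh}\big(e^{t/\varepsilon}\sinh(x/\varepsilon)\big) = x + t\,\mathrm{sign}(x)$. -/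
/-!
Since `2 sinh a = eᵃ (1 - e⁻²ᵃ)`, both `log (2 sinh a) - a` and `arsinh y - log (2 y)`
tend to `0` at infinity. For `x > 0` and `s = 1/ε → ∞` this gives
`arsinh (eᵗˢ sinh (x s)) = log (2 eᵗˢ sinh (x s)) + o(1) = (x + t) s + o(1)`,
so `ε arsinh (e^{t/ε} sinh (x/ε)) → x + t`; the case `x < 0` follows since `arsinh` and
`sinh` are odd.
-/

open Filter Real Topology

lemma tendsto_log_two_mul_sinh_sub_self :
    Tendsto (fun a => log (2 * sinh a) - a) atTop (𝓝 0) := by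
  have h_exp : Tendsto (fun a => exp (-(2 * a))) atTop (𝓝 0) :=
    tendsto_exp_atBot.comp <| tendsto_neg_atTop_atBot.comp <|
      tendsto_id.const_mul_atTop two_pos
  have h_log : Tendsto (fun a => log (1 - exp (-(2 * a)))) atTop (𝓝 0) := by
    have h := (continuousAt_log (by norm_num : (1 : ℝ) - 0 ≠ 0)).tendsto.comp
      (h_exp.const_sub 1)
    rwa [sub_zero, log_one] at h
  refine h_log.congr' ?_
  filter_upwards [eventually_gt_atTop 0] with a ha
  have h_factor : 2 * sinh a = exp a * (1 - exp (-(2 * a))) := by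
    rw [sinh_eq, mul_sub, ← exp_add]
    ring_nf
  have h_ne : 1 - exp (-(2 * a)) ≠ 0 := (sub_pos.mpr (exp_lt_one_iff.mpr (by linarith))).ne'
  rw [h_factor, log_mul (exp_ne_zero a) h_ne, log_exp, add_sub_cancel_left]

lemma tendsto_arsinh_sub_log_two_mul :
    Tendsto (fun y => arsinh y - log (2 * y)) atTop (𝓝 0) := by
  have h_arsinh : Tendsto arsinh atTop atTop := sinhOrderIso.symm.tendsto_atTop
  have h := (tendsto_log_two_mul_sinh_sub_self.comp h_arsinh).neg
  rw [neg_zero] at h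
  refine h.congr fun y => ?_
  rw [Function.comp_apply, sinh_arsinh, neg_sub]

lemma tendsto_arsinh_exp_mul_mul_sinh_mul_sub {t x : ℝ} (ht : 0 ≤ t) (hx : 0 < x) :
    Tendsto (fun s => arsinh (exp (t * s) * sinh (x * s)) - (x + t) * s) atTop (𝓝 0) := by
  have h_xs : Tendsto (fun s => x * s) atTop atTop := tendsto_id.const_mul_atTop hx
  have h_large : Tendsto (fun s => exp (t * s) * sinh (x * s)) atTop atTop := by
    refine tendsto_atTop_mono' _ ?_ (sinhOrderIso.tendsto_atTop.comp h_xs)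
    filter_upwards [eventually_ge_atTop 0] with s hs
    have h_sinh : 0 ≤ sinh (x * s) := sinh_nonneg_iff.mpr (by positivity)
    exact le_mul_of_one_le_left h_sinh (one_le_exp (by positivity))
  have h := (tendsto_arsinh_sub_log_two_mul.comp h_large).add
    (tendsto_log_two_mul_sinh_sub_self.comp h_xs)
  rw [add_zero] at h
  refine h.congr' ?_
  filter_upwards [eventually_gt_atTop 0] with s hs
  have h_sinh : 2 * sinh (x * s) ≠ 0 := by positivity
  simp only [Function.comp_apply]
  rw [mul_left_comm, log_mul (exp_ne_zero _) h_sinh, log_exp]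
  ring

lemma tendsto_mul_comp_inv_of_tendsto_sub_mul {g : ℝ → ℝ} {c : ℝ}
    (h : Tendsto (fun s => g s - c * s) atTop (𝓝 0)) :
    Tendsto (fun ε => ε * g ε⁻¹) (𝓝[>] 0) (𝓝 c) := by
  have h_id : Tendsto (fun ε : ℝ => ε) (𝓝[>] 0) (𝓝 0) := nhdsWithin_le_nhds
  have h' := ((h_id.mul (h.comp tendsto_inv_nhdsGT_zero)).const_add c)
  rw [mul_zero, add_zero] at h'
  refine h'.congr' ?_
  filter_upwards [self_mem_nhdsWithin] with ε (hε : 0 < ε)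
  simp only [Function.comp_apply]
  field_simp
  ring

lemma tendsto_mul_arsinh_exp_div_mul_sinh_div {t x : ℝ} (ht : 0 ≤ t) (hx : 0 < x) :
    Tendsto (fun ε => ε * arsinh (exp (t / ε) * sinh (x / ε))) (𝓝[>] 0) (𝓝 (x + t)) := by
  simpa only [div_eq_mul_inv] using
    tendsto_mul_comp_inv_of_tendsto_sub_mul (tendsto_arsinh_exp_mul_mul_sinh_mul_sub ht hx)

theorem stmt_7 (t x : ℝ) (ht : 0 < t) (hx : x ≠ 0) :
    Tendsto (fun ε : ℝ => ε * Real.arsinh (Real.exp (t / ε) * Real.sinh (x / ε)))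
      (nhdsWithin 0 (Set.Ioi 0)) (nhds (x + t * Real.sign x)) := by
  rcases hx.lt_or_gt with hneg | hpos
  · have h := (tendsto_mul_arsinh_exp_div_mul_sinh_div ht.le (neg_pos.mpr hneg)).neg
    rw [sign_of_neg hneg, show x + t * -1 = -(-x + t) by ring]
    refine h.congr fun ε => ?_
    rw [neg_div, sinh_neg, mul_neg, arsinh_neg, mul_neg, neg_neg]
  · rw [sign_of_pos hpos, mul_one]
    exact tendsto_mul_arsinh_exp_div_mul_sinh_div ht.le hpos
end

section
/- For fixed $t > 0$: if $|x| < t$ then $\lim_{\varepsilon \downarrow 0} \varepsilon\,\mathrm{arsinh}(e^{-t/\varepsilon}\sinh(x/\varepsilon)) = 0$; if $x > t$ then the limit equals $x - t$; and if $x < -t$ then the limit equals $x + t$. -/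
/-!
For `|x| ≤ t` the argument `e^{-t/ε} sinh(x/ε)` stays in `[-1/2, 1/2]`, so `arsinh` of it is
bounded and the factor `ε` kills it. For `x > t` the argument is comparable to `e^{(x-t)/ε}`, and
since `arsinh y = log (2y) + O(1)` as `y → ∞`, multiplying by `ε` leaves `x - t + O(ε)`.
The case `x < -t` follows because the expression is odd in `x`.
-/

open Filter Topology

namespace Real

lemma abs_arsinh (y : ℝ) : |arsinh y| = arsinh |y| := by
  rcases le_total 0 y with hy | hy
  · rw [abs_of_nonneg hy, abs_of_nonneg (arsinh_nonneg_iff.2 hy)]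
  · rw [abs_of_nonpos hy, abs_of_nonpos (arsinh_nonpos_iff.2 hy), arsinh_neg]

lemma abs_arsinh_le_abs (y : ℝ) : |arsinh y| ≤ |y| :=
  calc |arsinh y| = arsinh |y| := abs_arsinh y
    _ ≤ arsinh (sinh |y|) := arsinh_le_arsinh.2 (self_le_sinh_iff.2 (abs_nonneg y))
    _ = |y| := arsinh_sinh _

lemma log_two_mul_le_arsinh {y : ℝ} (hy : 0 < y) : log (2 * y) ≤ arsinh y := by
  refine log_le_log (by positivity) ?_
  have : y ≤ √(1 + y ^ 2) := le_sqrt_of_sq_le (by linarith)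
  linarith

lemma arsinh_le_log_one_add_two_mul {y : ℝ} (hy : 0 ≤ y) : arsinh y ≤ log (1 + 2 * y) := by
  refine log_le_log (by positivity) ?_
  have : √(1 + y ^ 2) ≤ 1 + y := sqrt_le_iff.2 ⟨by linarith, by nlinarith⟩
  linarith

lemma exp_mul_sinh_le (a b : ℝ) : exp a * sinh b ≤ exp (a + b) / 2 := by
  rw [sinh_eq, exp_add]
  nlinarith [exp_pos a, exp_pos (-b)]

lemma exp_add_div_four_le_exp_mul_sinh (a : ℝ) {b : ℝ} (hb : 1 / 2 ≤ b) :
    exp (a + b) / 4 ≤ exp a * sinh b := by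
  have h2 : 2 ≤ exp (b + b) := by linarith [add_one_le_exp (b + b)]
  have hb' : exp (-b) * 2 ≤ exp b := by
    calc exp (-b) * 2 ≤ exp (-b) * exp (b + b) := by gcongr
      _ = exp b := by rw [← exp_add]; ring_nf
  rw [sinh_eq, exp_add]
  nlinarith [exp_pos a]

end Real

open Real

lemma tendsto_mul_arsinh_of_le_of_le {s c C : ℝ} {u : ℝ → ℝ} (hs : 0 ≤ s) (hc : 0 < c)
    (hu : ∀ᶠ ε in 𝓝[>] 0, c * exp (s / ε) ≤ u ε ∧ u ε ≤ C * exp (s / ε)) :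
    Tendsto (fun ε => ε * arsinh (u ε)) (𝓝[>] 0) (𝓝 s) := by
  have affine_tendsto (k : ℝ) : Tendsto (fun ε : ℝ => s + ε * k) (𝓝[>] 0) (𝓝 s) := by
    refine tendsto_nhdsWithin_of_tendsto_nhds ?_
    simpa using (tendsto_const_nhds (x := s)).add ((tendsto_id (x := 𝓝 (0 : ℝ))).mul_const k)
  refine tendsto_of_tendsto_of_tendsto_of_le_of_le' (affine_tendsto (log (2 * c)))
    (affine_tendsto (log (1 + 2 * C))) ?_ ?_
  all_goals
    filter_upwards [hu, self_mem_nhdsWithin] with ε ⟨hlo, hhi⟩ (hε : 0 < ε)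
    have hE : 1 ≤ exp (s / ε) := one_le_exp (div_nonneg hs hε.le)
    have hu_pos : 0 < u ε := lt_of_lt_of_le (by positivity) hlo
    have hC : 0 < C := hc.trans_le (le_of_mul_le_mul_right (hlo.trans hhi) (exp_pos _))
    have hε_mul : ε * (s / ε) = s := mul_div_cancel₀ s hε.ne'
  · calc s + ε * log (2 * c) = ε * log (2 * c * exp (s / ε)) := by
          rw [log_mul (by positivity) (exp_pos _).ne', log_exp, mul_add, hε_mul, add_comm]
      _ ≤ ε * log (2 * u ε) := by gcongr ε * log ?_; linarith
      _ ≤ ε * arsinh (u ε) := by gcongr; exact log_two_mul_le_arsinh hu_pos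
  · calc ε * arsinh (u ε) ≤ ε * log (1 + 2 * u ε) := by
          gcongr; exact arsinh_le_log_one_add_two_mul hu_pos.le
      _ ≤ ε * log ((1 + 2 * C) * exp (s / ε)) := by gcongr ε * log ?_; nlinarith
      _ = s + ε * log (1 + 2 * C) := by
          rw [log_mul (by positivity) (exp_pos _).ne', log_exp, mul_add, hε_mul, add_comm]

noncomputable def regularizedSolution (t x ε : ℝ) : ℝ :=
  ε * arsinh (exp (-t / ε) * sinh (x / ε))

lemma regularizedSolution_neg (t x : ℝ) :
    regularizedSolution t (-x) = -regularizedSolution t x := by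
  funext ε
  simp only [regularizedSolution, neg_div, sinh_neg, mul_neg, arsinh_neg, Pi.neg_apply]

lemma tendsto_regularizedSolution_of_abs_le {t x : ℝ} (hx : |x| ≤ t) :
    Tendsto (regularizedSolution t x) (𝓝[>] 0) (𝓝 0) := by
  have hid : Tendsto (fun ε : ℝ => ε) (𝓝[>] 0) (𝓝 0) :=
    tendsto_nhdsWithin_of_tendsto_nhds tendsto_id
  refine hid.zero_mul_isBoundedUnder_le (isBoundedUnder_of_eventually_le (a := 1 / 2) ?_)
  filter_upwards [self_mem_nhdsWithin] with ε (hε : 0 < ε)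
  have hexp : exp (-t / ε + |x| / ε) ≤ 1 := by
    rw [exp_le_one_iff, ← add_div]
    exact div_nonpos_of_nonpos_of_nonneg (by linarith) hε.le
  calc ‖arsinh (exp (-t / ε) * sinh (x / ε))‖ ≤ |exp (-t / ε) * sinh (x / ε)| :=
        abs_arsinh_le_abs _
    _ = exp (-t / ε) * sinh (|x| / ε) := by
        rw [abs_mul, abs_of_pos (exp_pos _), abs_sinh, abs_div, abs_of_pos hε]
    _ ≤ exp (-t / ε + |x| / ε) / 2 := exp_mul_sinh_le _ _
    _ ≤ 1 / 2 := by linarith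

lemma tendsto_regularizedSolution_of_lt {t x : ℝ} (hx : 0 < x) (htx : t < x) :
    Tendsto (regularizedSolution t x) (𝓝[>] 0) (𝓝 (x - t)) := by
  refine tendsto_mul_arsinh_of_le_of_le (c := 1 / 4) (C := 1 / 2) (by linarith) (by norm_num) ?_
  filter_upwards [Ioo_mem_nhdsGT (by linarith : (0 : ℝ) < 2 * x)] with ε ⟨hε, hεx⟩
  have hexp : -t / ε + x / ε = (x - t) / ε := by ring
  have hb : 1 / 2 ≤ x / ε := by rw [le_div_iff₀ hε]; linarith
  constructor
  · linarith [hexp ▸ exp_add_div_four_le_exp_mul_sinh (-t / ε) hb]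
  · linarith [hexp ▸ exp_mul_sinh_le (-t / ε) (x / ε)]

theorem stmt_8 (t x : ℝ) (ht : 0 < t) :
    (|x| < t → Tendsto
        (fun ε : ℝ => ε * Real.arsinh (Real.exp (-t / ε) * Real.sinh (x / ε)))
        (nhdsWithin 0 (Set.Ioi 0)) (nhds 0)) ∧
    (t < x → Tendsto
        (fun ε : ℝ => ε * Real.arsinh (Real.exp (-t / ε) * Real.sinh (x / ε)))
        (nhdsWithin 0 (Set.Ioi 0)) (nhds (x - t))) ∧
    (x < -t → Tendsto
        (fun ε : ℝ => ε * Real.arsinh (Real.exp (-t / ε) * Real.sinh (x / ε)))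
        (nhdsWithin 0 (Set.Ioi 0)) (nhds (x + t))) := by
  refine ⟨fun hx => tendsto_regularizedSolution_of_abs_le hx.le,
    fun hx => tendsto_regularizedSolution_of_lt (ht.trans hx) hx, fun hx => ?_⟩
  have h := tendsto_regularizedSolution_of_lt (by linarith : 0 < -x) (by linarith : t < -x)
  rw [regularizedSolution_neg] at h
  convert h.neg using 2
  · exact (neg_neg _).symm
  · ring
end
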